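/- arXiv:2311.09973 — 3 statements merged into one kernel-verified Lean document; each statement's English description precedes it below -/
import Mathlib

section
/- Let c > 0, α > 0 and let N be a positive integer, and set a_j = c/(α · log(N + j)) for j ≥ 2 (assume 0 < a_j < 1 for all j ≥ 2). Let X ⊆ ℝ be {a_j}-porous. Then for every K ≥ 1 and every K-quasi-symmetric increasing homeomorphism f : ℝ → ℝ, the image f(X) has Lebesgue measure zero. -/
/-!
Repeated bisection shows that a `K`-quasisymmetric map distorts relative lengths at most
polynomially: if `J ⊆ I` are intervals with `|J| ≥ a|I|`, then `|f(J)| ≥ (a/4)^β |f(I)|`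
with `β = log₂(1 + K)`. Hence the images of the porosity covers are nested covers of `f(X)`
in which passing from generation `n` to `n + 1` removes at least the fraction
`φₙ = (aₙ/4)^β` of the measure. Since `aₙ ≍ 1/log n`, eventually `φₙ ≥ 1/n`, so `∑ φₙ = ∞`
and `∏ (1 - φₙ) = 0`; on each bounded piece of `X` the covers eventually have finite
measure, so `f(X)` is null.
-/

open MeasureTheory Set

/-- A set `X ⊆ ℝ` is `{aₙ}`-porous: there is a sequence of coverings of `X` by closed
intervals (encoded by their endpoint pairs) with pairwise disjoint interiors such that
every interval `E` of the `n`-th covering contains a 'hole', a subinterval disjoint from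
`X` of length at least `aₙ · leb(E)`; every interval of the `(n+1)`-st covering is
contained in `E ∖ E'` for some interval `E` of the `n`-th covering with hole `E'`; and the
supremum of the lengths of the intervals of the `n`-th covering tends to `0`. -/
def IsPorous (a : ℕ → ℝ) (X : Set ℝ) : Prop :=
  ∃ (C : ℕ → Set (ℝ × ℝ)) (h : ℕ → ℝ × ℝ → ℝ × ℝ),
    (∀ n, ∀ p ∈ C n, p.1 ≤ p.2) ∧
    (∀ n, X ⊆ ⋃ p ∈ C n, Icc p.1 p.2) ∧
    (∀ n, (C n).Pairwise fun p q => Disjoint (Ioo p.1 p.2) (Ioo q.1 q.2)) ∧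
    (∀ n, ∀ p ∈ C n,
      Icc (h n p).1 (h n p).2 ⊆ Icc p.1 p.2 ∧
      Disjoint (Icc (h n p).1 (h n p).2) X ∧
      a n * (p.2 - p.1) ≤ (h n p).2 - (h n p).1) ∧
    (∀ n, ∀ q ∈ C (n + 1), ∃ p ∈ C n,
      Icc q.1 q.2 ⊆ Icc p.1 p.2 \ Icc (h n p).1 (h n p).2) ∧
    (∀ ε > (0 : ℝ), ∃ N : ℕ, ∀ n ≥ N, ∀ p ∈ C n, p.2 - p.1 ≤ ε)

/-- An increasing homeomorphism `f : ℝ → ℝ` is a `K`-quasi-symmetry if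
`1/K ≤ (f(x+t) − f(x)) / (f(x) − f(x−t)) ≤ K` for all `x` and all `t > 0`. -/
def IsQuasiSymmetry (K : ℝ) (f : ℝ → ℝ) : Prop :=
  ∀ x t : ℝ, 0 < t →
    1 / K ≤ (f (x + t) - f x) / (f x - f (x - t)) ∧
    (f (x + t) - f x) / (f x - f (x - t)) ≤ K

open Filter Topology
open scoped ENNReal

def PreservesHoles (f : ℝ → ℝ) (a θ : ℝ) : Prop :=
  ∀ ⦃p q u v : ℝ⦄, p < q → p ≤ u → v ≤ q → a * (q - p) ≤ v - u →
    θ * (f q - f p) ≤ f v - f u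

namespace IsQuasiSymmetry

variable {K : ℝ} {f : ℝ → ℝ}

lemma sub_div_le_halves (hqs : IsQuasiSymmetry K f) (hK : 0 < K) (hf : StrictMono f) (y : ℝ)
    {t : ℝ} (ht : 0 < t) :
    (f (y + 2 * t) - f y) / (1 + K) ≤ f (y + t) - f y ∧
      (f (y + 2 * t) - f y) / (1 + K) ≤ f (y + 2 * t) - f (y + t) := by
  obtain ⟨hlo, hhi⟩ := hqs (y + t) t ht
  rw [show y + t + t = y + 2 * t by ring, add_sub_cancel_right] at hlo hhi
  have hL : 0 < f (y + t) - f y := sub_pos.mpr (hf (by linarith))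
  rw [div_le_iff₀ hL] at hhi
  rw [div_le_div_iff₀ hK hL] at hlo
  constructor <;> rw [div_le_iff₀ (by linarith)] <;> nlinarith

lemma sub_div_pow_le_sub_dyadic (hqs : IsQuasiSymmetry K f) (hK : 0 < K)
    (hf : StrictMono f) {t : ℝ} (ht : 0 < t) (m : ℕ) :
    ∀ y : ℝ, ∀ k : ℕ, k < 2 ^ m →
      (f (y + 2 ^ m * t) - f y) / (1 + K) ^ m ≤ f (y + (k + 1) * t) - f (y + k * t) := by
  induction m with
  | zero =>
    intro y k hk
    obtain rfl : k = 0 := by omega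
    simp
  | succ m ih =>
    intro y k hk
    have h2m : 0 < (2 : ℝ) ^ m * t := by positivity
    obtain ⟨hleft, hright⟩ := hqs.sub_div_le_halves hK hf y h2m
    rw [← mul_assoc, ← pow_succ'] at hleft hright
    rw [pow_succ (1 + K), div_mul_eq_div_div_swap]
    rcases lt_or_ge k (2 ^ m) with hkm | hkm
    · exact (div_le_div_of_nonneg_right hleft (by positivity)).trans (ih y k hkm)
    · obtain ⟨j, rfl⟩ : ∃ j, k = 2 ^ m + j := ⟨k - 2 ^ m, by omega⟩
      have hj := ih (y + 2 ^ m * t) j (by rw [pow_succ] at hk; omega)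
      have e : y + 2 ^ m * t + 2 ^ m * t = y + 2 ^ (m + 1) * t := by ring
      rw [e] at hj
      push_cast
      rw [show y + (2 ^ m + j + 1) * t = y + 2 ^ m * t + (j + 1) * t by ring,
        show y + (2 ^ m + j) * t = y + 2 ^ m * t + j * t by ring]
      exact (div_le_div_of_nonneg_right hright (by positivity)).trans hj

lemma sub_div_pow_le_sub (hqs : IsQuasiSymmetry K f) (hK : 0 < K) (hf : StrictMono f)
    {p q u v : ℝ} {m : ℕ} (hpq : p < q) (hpu : p ≤ u) (hvq : v ≤ q)
    (hlen : 2 * ((q - p) / 2 ^ m) ≤ v - u) :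
    (f q - f p) / (1 + K) ^ m ≤ f v - f u := by
  set t := (q - p) / 2 ^ m
  have ht : 0 < t := div_pos (sub_pos.mpr hpq) (by positivity)
  have hq : q = p + 2 ^ m * t := by simp only [t]; field_simp; ring
  set k := ⌈(u - p) / t⌉₊
  have hku : u ≤ p + k * t := by
    have := (div_le_iff₀ ht).mp (Nat.le_ceil ((u - p) / t)); linarith
  have hkv : p + (k + 1) * t ≤ v := by
    have hk1 := Nat.ceil_lt_add_one (div_nonneg (sub_nonneg.mpr hpu) ht.le)
    rw [← sub_lt_iff_lt_add, lt_div_iff₀ ht] at hk1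
    linarith
  have hk : k < 2 ^ m := by
    have : ((k : ℝ) + 1) * t ≤ 2 ^ m * t := by linarith
    exact_mod_cast (lt_add_one (k : ℝ)).trans_le (le_of_mul_le_mul_right this ht)
  calc (f q - f p) / (1 + K) ^ m
      ≤ f (p + (k + 1) * t) - f (p + k * t) :=
        hq ▸ hqs.sub_div_pow_le_sub_dyadic hK hf ht m p k hk
    _ ≤ f v - f u := by linarith [hf.monotone hkv, hf.monotone hku]

lemma preservesHoles (hqs : IsQuasiSymmetry K f) (hK : 0 < K) (hf : StrictMono f) {a : ℝ}
    (ha : 0 < a) : PreservesHoles f a ((a / 4) ^ Real.logb 2 (1 + K)) := by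
  intro p q u v hpq hpu hvq hlen
  have ha1 : a ≤ 1 := le_of_mul_le_mul_right (by linarith) (sub_pos.mpr hpq)
  -- the dyadic level `n + 1` is chosen with `2 / a < 2 ^ (n + 1) ≤ 4 / a`
  obtain ⟨n, hn, hn'⟩ :=
    exists_nat_pow_near ((le_div_iff₀ ha).mpr (by linarith) : 1 ≤ 2 / a) one_lt_two
  set β := Real.logb 2 (1 + K)
  have hβ : 0 < β := Real.logb_pos one_lt_two (by linarith)
  have h2m : (2 : ℝ) ^ (n + 1) ≤ 4 / a := by
    rw [pow_succ, show 4 / a = 2 / a * 2 by ring]; linarith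
  have hcoef : (a / 4) ^ β ≤ ((1 + K) ^ (n + 1))⁻¹ := by
    rw [← Real.rpow_logb two_pos (by norm_num) (by linarith : 0 < 1 + K),
      Real.rpow_pow_comm zero_le_two, ← inv_div, Real.inv_rpow (by positivity)]
    exact inv_anti₀ (by positivity) (Real.rpow_le_rpow (by positivity) h2m hβ.le)
  have hstep : 2 * ((q - p) / 2 ^ (n + 1)) ≤ v - u := by
    rw [mul_div_assoc', div_le_iff₀ (by positivity)]
    rw [div_lt_iff₀ ha] at hn'
    nlinarith [mul_le_mul_of_nonneg_right hlen (by positivity : (0 : ℝ) ≤ 2 ^ (n + 1)),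
      mul_lt_mul_of_pos_right hn' (sub_pos.mpr hpq)]
  calc (a / 4) ^ β * (f q - f p) ≤ ((1 + K) ^ (n + 1))⁻¹ * (f q - f p) :=
        mul_le_mul_of_nonneg_right hcoef (sub_nonneg.mpr (hf.monotone hpq.le))
    _ = (f q - f p) / (1 + K) ^ (n + 1) := inv_mul_eq_div _ _
    _ ≤ f v - f u := hqs.sub_div_pow_le_sub hK hf hpq hpu hvq hstep

end IsQuasiSymmetry

lemma eventually_inv_le_div_log_rpow {C β : ℝ} (hC : 0 < C) (hβ : 0 < β) :
    ∀ᶠ x : ℝ in atTop, x⁻¹ ≤ (C / Real.log x) ^ β := by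
  filter_upwards [(isLittleO_log_rpow_atTop (inv_pos.mpr hβ)).bound hC,
    eventually_gt_atTop 1] with x hlog hx
  have hlog0 : 0 < Real.log x := Real.log_pos hx
  have hxβ : 0 < x ^ β⁻¹ := Real.rpow_pos_of_pos (by linarith) _
  rw [Real.norm_of_nonneg hlog0.le, Real.norm_of_nonneg hxβ.le] at hlog
  calc x⁻¹ = ((x ^ β⁻¹)⁻¹) ^ β := by
        rw [Real.inv_rpow hxβ.le, Real.rpow_inv_rpow (by linarith) hβ.ne']
    _ ≤ (C / Real.log x) ^ β := by
        gcongr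
        rwa [le_div_iff₀ hlog0, inv_mul_le_iff₀ hxβ, mul_comm]

open Finset in
lemma tendsto_sum_range_div_log_rpow_atTop {C b β : ℝ} (hC : 0 < C) (hb : 1 ≤ b)
    (hβ : 0 < β) :
    Tendsto (fun n => ∑ i ∈ range n, (C / Real.log (i + b)) ^ β) atTop atTop := by
  have hnonneg : ∀ i : ℕ, 0 ≤ (C / Real.log (i + b)) ^ β := fun i =>
    Real.rpow_nonneg (div_nonneg hC.le (Real.log_nonneg (by linarith [i.cast_nonneg (α := ℝ)])))
      _
  rw [← not_summable_iff_tendsto_nat_atTop_of_nonneg hnonneg]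
  intro hsum
  have hshift : Tendsto (fun n : ℕ => (n : ℝ) + b) atTop atTop :=
    tendsto_atTop_add_const_right _ b tendsto_natCast_atTop_atTop
  refine (Real.summable_one_div_nat_add_rpow b 1).not.mpr (lt_irrefl 1)
    (hsum.of_norm_bounded_eventually_nat ?_)
  filter_upwards [hshift.eventually (eventually_inv_le_div_log_rpow hC hβ)] with n hn
  have hpos : 0 ≤ (n : ℝ) + b := by linarith [n.cast_nonneg (α := ℝ)]
  simpa [abs_of_nonneg hpos] using hn

open Finset in
lemma le_ofReal_exp_sub_mul_of_le_one_sub_mul {u : ℕ → ℝ≥0∞} {φ : ℕ → ℝ} {n₀ : ℕ}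
    (hu : ∀ n, u (n + 1) ≤ ENNReal.ofReal (1 - φ n) * u n) :
    ∀ n ≥ n₀,
      u n ≤ ENNReal.ofReal (Real.exp (∑ i ∈ range n₀, φ i - ∑ i ∈ range n, φ i)) * u n₀ := by
  refine Nat.le_induction (by simp) fun n _ ih => ?_
  calc u (n + 1) ≤ ENNReal.ofReal (1 - φ n) * u n := hu n
    _ ≤ ENNReal.ofReal (Real.exp (-φ n)) *
          (ENNReal.ofReal (Real.exp (∑ i ∈ range n₀, φ i - ∑ i ∈ range n, φ i)) * u n₀) := by
        gcongr
        linarith [Real.add_one_le_exp (-φ n)]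
    _ = _ := by
        rw [← mul_assoc, ← ENNReal.ofReal_mul (Real.exp_pos _).le, ← Real.exp_add,
          sum_range_succ]
        ring_nf

open Finset in
lemma tendsto_zero_of_le_one_sub_mul {u : ℕ → ℝ≥0∞} {φ : ℕ → ℝ} {n₀ : ℕ}
    (hφ : Tendsto (fun n => ∑ i ∈ range n, φ i) atTop atTop) (hn₀ : u n₀ ≠ ⊤)
    (hu : ∀ n, u (n + 1) ≤ ENNReal.ofReal (1 - φ n) * u n) :
    Tendsto u atTop (𝓝 0) := by
  have hexp : Tendsto (fun n => Real.exp (∑ i ∈ range n₀, φ i - ∑ i ∈ range n, φ i))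
      atTop (𝓝 0) :=
    Real.tendsto_exp_atBot.comp
      (tendsto_atBot_add_const_left _ _ (tendsto_neg_atTop_atBot.comp hφ))
  have hbound : Tendsto (fun n => ENNReal.ofReal
      (Real.exp (∑ i ∈ range n₀, φ i - ∑ i ∈ range n, φ i)) * u n₀) atTop (𝓝 0) := by
    simpa using ENNReal.Tendsto.mul_const (ENNReal.tendsto_ofReal hexp) (Or.inr hn₀)
  exact tendsto_of_tendsto_of_tendsto_of_le_of_le' tendsto_const_nhds hbound
    (Eventually.of_forall fun _ => zero_le)
    ((eventually_ge_atTop n₀).mono (le_ofReal_exp_sub_mul_of_le_one_sub_mul hu))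

lemma StrictMono.disjoint_Ioo_Ioo_iff {α β : Type*} [LinearOrder α] [DenselyOrdered α]
    [LinearOrder β] [DenselyOrdered β] {f : α → β} (hf : StrictMono f) {a₁ a₂ b₁ b₂ : α} :
    Disjoint (Ioo (f a₁) (f a₂)) (Ioo (f b₁) (f b₂)) ↔
      Disjoint (Ioo a₁ a₂) (Ioo b₁ b₂) := by
  simp only [Ioo_disjoint_Ioo, ← hf.monotone.map_min, ← hf.monotone.map_max, hf.le_iff_le]

lemma StrictMono.Icc_subset_Icc_diff_Icc {f : ℝ → ℝ} (hf : StrictMono f) (hfc : Continuous f)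
    {x y a b c d : ℝ} (hxy : x ≤ y) (h : Icc x y ⊆ Icc a b \ Icc c d) :
    Icc (f x) (f y) ⊆ Icc (f a) (f b) \ Icc (f c) (f d) := by
  intro z hz
  obtain ⟨w, hw, rfl⟩ := intermediate_value_Icc hxy hfc.continuousOn hz
  obtain ⟨⟨haw, hwb⟩, hwcd⟩ := h hw
  exact ⟨⟨hf.monotone haw, hf.monotone hwb⟩,
    fun ⟨hcw, hwd⟩ => hwcd ⟨hf.le_iff_le.mp hcw, hf.le_iff_le.mp hwd⟩⟩

lemma volume_Icc_diff_Icc_le {l r l' r' θ : ℝ} (hl : l ≤ l') (hr : r' ≤ r)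
    (hlen : θ * (r - l) ≤ r' - l') :
    volume (Icc l r \ Icc l' r') ≤ ENNReal.ofReal ((1 - θ) * (r - l)) := by
  have hsub : Icc l r \ Icc l' r' ⊆ Ico l l' ∪ Ioc r' r := by
    rintro z ⟨⟨hlz, hzr⟩, hz⟩
    rw [mem_Icc, not_and_or, not_le, not_le] at hz
    exact hz.imp (fun h => ⟨hlz, h⟩) (fun h => ⟨h, hzr⟩)
  calc volume (Icc l r \ Icc l' r')
      ≤ volume (Ico l l') + volume (Ioc r' r) :=
        (measure_mono hsub).trans (measure_union_le _ _)
    _ = ENNReal.ofReal ((l' - l) + (r - r')) := by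
        rw [Real.volume_Ico, Real.volume_Ioc, ENNReal.ofReal_add (by linarith) (by linarith)]
    _ ≤ ENNReal.ofReal ((1 - θ) * (r - l)) := ENNReal.ofReal_le_ofReal (by linarith)

lemma volume_biUnion_Icc_diff_Icc_le {ι : Type*} {s : Set ι} {l r l' r' : ι → ℝ} {θ : ℝ}
    (hlr : ∀ i ∈ s, l i < r i) (hdisj : s.PairwiseDisjoint fun i => Ioo (l i) (r i))
    (hl : ∀ i ∈ s, l i ≤ l' i) (hr : ∀ i ∈ s, r' i ≤ r i)
    (hlen : ∀ i ∈ s, θ * (r i - l i) ≤ r' i - l' i) :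
    volume (⋃ i ∈ s, Icc (l i) (r i) \ Icc (l' i) (r' i)) ≤
      ENNReal.ofReal (1 - θ) * volume (⋃ i ∈ s, Icc (l i) (r i)) := by
  have hs : s.Countable :=
    hdisj.countable_of_isOpen (fun _ _ => isOpen_Ioo) fun i hi => nonempty_Ioo.mpr (hlr i hi)
  calc volume (⋃ i ∈ s, Icc (l i) (r i) \ Icc (l' i) (r' i))
      ≤ ∑' i : s, volume (Icc (l i) (r i) \ Icc (l' i) (r' i)) := measure_biUnion_le _ hs _
    _ ≤ ∑' i : s, ENNReal.ofReal (1 - θ) * volume (Ioo (l i) (r i)) := by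
        refine ENNReal.tsum_le_tsum fun ⟨i, hi⟩ => ?_
        rw [Real.volume_Ioo, ← ENNReal.ofReal_mul' (sub_nonneg.mpr (hlr i hi).le)]
        exact volume_Icc_diff_Icc_le (hl i hi) (hr i hi) (hlen i hi)
    _ = ENNReal.ofReal (1 - θ) * volume (⋃ i ∈ s, Ioo (l i) (r i)) := by
        rw [ENNReal.tsum_mul_left, measure_biUnion hs hdisj fun _ _ => measurableSet_Ioo]
    _ ≤ ENNReal.ofReal (1 - θ) * volume (⋃ i ∈ s, Icc (l i) (r i)) := by
        gcongr
        exact Ioo_subset_Icc_self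

structure PorousCover (a : ℕ → ℝ) (X : Set ℝ) where
  C : ℕ → Set (ℝ × ℝ)
  hole : ℕ → ℝ × ℝ → ℝ × ℝ
  subset_biUnion : ∀ n, X ⊆ ⋃ p ∈ C n, Icc p.1 p.2
  pairwise_disjoint : ∀ n, (C n).Pairwise fun p q => Disjoint (Ioo p.1 p.2) (Ioo q.1 q.2)
  hole_subset : ∀ n, ∀ p ∈ C n, Icc (hole n p).1 (hole n p).2 ⊆ Icc p.1 p.2
  disjoint_hole : ∀ n, ∀ p ∈ C n, Disjoint (Icc (hole n p).1 (hole n p).2) X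
  mul_le_hole : ∀ n, ∀ p ∈ C n, a n * (p.2 - p.1) ≤ (hole n p).2 - (hole n p).1
  nested : ∀ n, ∀ q ∈ C (n + 1), ∃ p ∈ C n,
    Icc q.1 q.2 ⊆ Icc p.1 p.2 \ Icc (hole n p).1 (hole n p).2
  small : ∀ ε > (0 : ℝ), ∃ N : ℕ, ∀ n ≥ N, ∀ p ∈ C n, p.2 - p.1 ≤ ε

lemma IsPorous.nonempty_porousCover {a : ℕ → ℝ} {X : Set ℝ} (hX : IsPorous a X) :
    Nonempty (PorousCover a X) :=
  let ⟨C, h, _, hcov, hdisj, hhole, hnest, hsmall⟩ := hX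
  ⟨⟨C, h, hcov, hdisj, fun n p hp => (hhole n p hp).1, fun n p hp => (hhole n p hp).2.1,
    fun n p hp => (hhole n p hp).2.2, hnest, hsmall⟩⟩

namespace PorousCover

variable {a : ℕ → ℝ} {X Y : Set ℝ} (P : PorousCover a X) {f : ℝ → ℝ}

def mono (hYX : Y ⊆ X) : PorousCover a Y where
  __ := P
  subset_biUnion n := hYX.trans (P.subset_biUnion n)
  disjoint_hole n p hp := (P.disjoint_hole n p hp).mono_right hYX

/-- Only the intervals meeting `X` matter: they are nondegenerate, and for bounded `X` they
eventually lie in a fixed bounded interval. -/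
def meeting (n : ℕ) : Set (ℝ × ℝ) := {p ∈ P.C n | (Icc p.1 p.2 ∩ X).Nonempty}

def imageCover (f : ℝ → ℝ) (n : ℕ) : Set ℝ := ⋃ p ∈ P.meeting n, Icc (f p.1) (f p.2)

lemma lt_of_mem_meeting {n : ℕ} {p : ℝ × ℝ} (hp : p ∈ P.meeting n) : p.1 < p.2 := by
  obtain ⟨hpC, x, ⟨hpx, hxp⟩, hxX⟩ := hp
  -- otherwise the hole is the point `x` of `X`
  by_contra! hle
  have hlen := P.mul_le_hole n p hpC
  rw [show p.2 - p.1 = 0 by linarith, mul_zero, sub_nonneg] at hlen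
  have h₁ := P.hole_subset n p hpC ⟨le_rfl, hlen⟩
  have h₂ := P.hole_subset n p hpC ⟨hlen, le_rfl⟩
  exact disjoint_left.mp (P.disjoint_hole n p hpC)
    ⟨by linarith [h₁.2], by linarith [h₂.1]⟩ hxX

lemma fst_le_hole_and_hole_le_snd {n : ℕ} (ha : 0 ≤ a n) {p : ℝ × ℝ} (hpC : p ∈ P.C n)
    (hp : p.1 < p.2) :
    p.1 ≤ (P.hole n p).1 ∧ (P.hole n p).2 ≤ p.2 := by
  have hle : (P.hole n p).1 ≤ (P.hole n p).2 := by
    nlinarith [P.mul_le_hole n p hpC]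
  exact ⟨(P.hole_subset n p hpC ⟨le_rfl, hle⟩).1, (P.hole_subset n p hpC ⟨hle, le_rfl⟩).2⟩

lemma image_subset_imageCover (hf : Monotone f) (n : ℕ) : f '' X ⊆ P.imageCover f n := by
  rintro _ ⟨x, hxX, rfl⟩
  obtain ⟨p, hpC, hxp⟩ := mem_iUnion₂.mp (P.subset_biUnion n hxX)
  exact mem_biUnion ⟨hpC, x, hxp, hxX⟩ ⟨hf hxp.1, hf hxp.2⟩

lemma imageCover_succ_subset (hf : StrictMono f) (hfc : Continuous f) (n : ℕ) :
    P.imageCover f (n + 1) ⊆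
      ⋃ p ∈ P.meeting n, Icc (f p.1) (f p.2) \ Icc (f (P.hole n p).1) (f (P.hole n p).2) := by
  refine iUnion₂_subset fun q hq => ?_
  obtain ⟨p, hpC, hqp⟩ := P.nested n q hq.1
  obtain ⟨x, hxq, hxX⟩ := hq.2
  have hpm : p ∈ P.meeting n := ⟨hpC, x, (hqp hxq).1, hxX⟩
  exact fun z hz =>
    mem_biUnion hpm (hf.Icc_subset_Icc_diff_Icc hfc (P.lt_of_mem_meeting hq).le hqp hz)

lemma volume_imageCover_succ_le {φ : ℕ → ℝ} (ha : ∀ n, 0 ≤ a n) (hf : StrictMono f)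
    (hfc : Continuous f) (hhole : ∀ n, PreservesHoles f (a n) (φ n)) (n : ℕ) :
    volume (P.imageCover f (n + 1)) ≤
      ENNReal.ofReal (1 - φ n) * volume (P.imageCover f n) := by
  have hlt : ∀ p ∈ P.meeting n, p.1 < p.2 := fun p hp => P.lt_of_mem_meeting hp
  have hmem : ∀ p ∈ P.meeting n, p.1 ≤ (P.hole n p).1 ∧ (P.hole n p).2 ≤ p.2 :=
    fun p hp => P.fst_le_hole_and_hole_le_snd (ha n) hp.1 (hlt p hp)
  refine (measure_mono (P.imageCover_succ_subset hf hfc n)).trans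
    (volume_biUnion_Icc_diff_Icc_le (fun p hp => hf (hlt p hp)) ?_
      (fun p hp => hf.monotone (hmem p hp).1) (fun p hp => hf.monotone (hmem p hp).2)
      fun p hp => hhole n (hlt p hp) (hmem p hp).1 (hmem p hp).2 (P.mul_le_hole n p hp.1))
  exact fun p hp q hq hpq => hf.disjoint_Ioo_Ioo_iff.mpr (P.pairwise_disjoint n hp.1 hq.1 hpq)

lemma exists_volume_imageCover_ne_top {l r : ℝ} (hX : X ⊆ Icc l r) (hf : Monotone f) :
    ∃ n, volume (P.imageCover f n) ≠ ⊤ := by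
  obtain ⟨n, hn⟩ := P.small 1 one_pos
  refine ⟨n, ne_top_of_le_ne_top (measure_Icc_lt_top (a := f (l - 1)) (b := f (r + 1))).ne
    (measure_mono (iUnion₂_subset fun p ⟨hpC, x, hxp, hxX⟩ => ?_))⟩
  have hlen := hn n le_rfl p hpC
  have hx := hX hxX
  exact Icc_subset_Icc (hf (by linarith [hxp.2, hx.1])) (hf (by linarith [hxp.1, hx.2]))

theorem volume_image_eq_zero_of_subset_Icc (P : PorousCover a X) {φ : ℕ → ℝ} {l r : ℝ}
    (hX : X ⊆ Icc l r) (ha : ∀ n, 0 ≤ a n) (hf : StrictMono f) (hfc : Continuous f)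
    (hhole : ∀ n, PreservesHoles f (a n) (φ n))
    (hφ : Tendsto (fun n => ∑ i ∈ Finset.range n, φ i) atTop atTop) :
    volume (f '' X) = 0 := by
  obtain ⟨n₀, hn₀⟩ := P.exists_volume_imageCover_ne_top hX hf.monotone
  have hlim :=
    tendsto_zero_of_le_one_sub_mul hφ hn₀ (P.volume_imageCover_succ_le ha hf hfc hhole)
  exact nonpos_iff_eq_zero.mp
    (ge_of_tendsto' hlim fun n => measure_mono (P.image_subset_imageCover hf.monotone n))

end PorousCover

theorem IsPorous.volume_image_eq_zero {a φ : ℕ → ℝ} {X : Set ℝ} {f : ℝ → ℝ}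
    (hX : IsPorous a X) (ha : ∀ n, 0 ≤ a n) (hf : StrictMono f) (hfc : Continuous f)
    (hhole : ∀ n, PreservesHoles f (a n) (φ n))
    (hφ : Tendsto (fun n => ∑ i ∈ Finset.range n, φ i) atTop atTop) :
    volume (f '' X) = 0 := by
  obtain ⟨P⟩ := hX.nonempty_porousCover
  have hcover : f '' X ⊆ ⋃ M : ℕ, f '' (X ∩ Icc (-M) M) := by
    rintro _ ⟨x, hx, rfl⟩
    obtain ⟨M, hM⟩ := exists_nat_ge |x|
    exact mem_iUnion.mpr ⟨M, x, ⟨hx, abs_le.mp hM⟩, rfl⟩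
  exact measure_mono_null hcover <| measure_iUnion_null fun M =>
    (P.mono inter_subset_left).volume_image_eq_zero_of_subset_Icc inter_subset_right ha hf hfc
      hhole hφ

theorem qs_image_of_log_porous_null_general (c α : ℝ) (hc : 0 < c) (hα : 0 < α)
    (N : ℕ)
    (ha : ∀ j : ℕ, 0 < c / (α * Real.log ((N : ℝ) + ((j : ℝ) + 2))) ∧
      c / (α * Real.log ((N : ℝ) + ((j : ℝ) + 2))) < 1)
    (X : Set ℝ)
    (hX : IsPorous (fun j => c / (α * Real.log ((N : ℝ) + ((j : ℝ) + 2)))) X)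
    (K : ℝ) (hK : 1 ≤ K) (f : ℝ → ℝ)
    (hmono : StrictMono f) (hcont : Continuous f)
    (hqs : IsQuasiSymmetry K f) :
    volume (f '' X) = 0 := by
  have hK₀ : 0 < K := by linarith
  refine hX.volume_image_eq_zero (fun j => (ha j).1.le) hmono hcont
    (fun j => hqs.preservesHoles hK₀ hmono (ha j).1) ?_
  have hb : (1 : ℝ) ≤ N + 2 := by linarith [N.cast_nonneg (α := ℝ)]
  convert tendsto_sum_range_div_log_rpow_atTop (by positivity : 0 < c / (4 * α)) hb
    (Real.logb_pos one_lt_two (by linarith : (1 : ℝ) < 1 + K)) using 4 with n i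
  ring_nf

/-- For `c, α > 0`, `N ≥ 1` and the sequence `a_j = c / (α log (N + j))`, `j ≥ 2`
(here reindexed by `j ↦ j + 2`), assumed to lie in `(0,1)`, the image of every
`{a_j}`-porous set `X ⊆ ℝ` under any `K`-quasi-symmetric increasing homeomorphism
of `ℝ` has Lebesgue measure zero. -/
theorem qs_image_of_log_porous_null (c α : ℝ) (hc : 0 < c) (hα : 0 < α)
    (N : ℕ) (hN : 1 ≤ N)
    (ha : ∀ j : ℕ, 0 < c / (α * Real.log ((N : ℝ) + ((j : ℝ) + 2))) ∧
      c / (α * Real.log ((N : ℝ) + ((j : ℝ) + 2))) < 1)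
    (X : Set ℝ)
    (hX : IsPorous (fun j => c / (α * Real.log ((N : ℝ) + ((j : ℝ) + 2)))) X)
    (K : ℝ) (hK : 1 ≤ K) (f : ℝ → ℝ)
    (hmono : StrictMono f) (hcont : Continuous f) (hsurj : Function.Surjective f)
    (hqs : IsQuasiSymmetry K f) :
    volume (f '' X) = 0 :=
  qs_image_of_log_porous_null_general c α hc hα N ha X hX K hK f hmono hcont hqs
end

section
/- Let K ≥ 1 and let f : ℝ → ℝ be a K-quasi-symmetric increasing homeomorphism. Then the Borel measure μ on ℝ defined by μ(E) = leb(f(E)) (the Lebesgue measure of the image of E under f) is a doubling measure: there exists M > 0, depending only on K, such that 0 < μ(B(p,2R)) ≤ M·μ(B(p,R)) for every p ∈ ℝ and every R > 0. -/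
open MeasureTheory Set

/-! Quasi-symmetry compares the increments of `f` over adjacent intervals of equal length. The
image of `[p - 2R, p + 2R]` is the image of `[p - R, p + R]` together with the images of the two
outer intervals of length `R`, and each of those is at most `K` times the adjacent inner
increment. Hence `f` stretches `[p - 2R, p + 2R]` by at most `K + 1` times as much as
`[p - R, p + R]`, and since `f` maps intervals onto intervals this is the doubling bound. -/

namespace IsQuasiSymmetry

variable {K : ℝ} {f : ℝ → ℝ}

lemma right_increment_le (hq : IsQuasiSymmetry K f) (hf : StrictMono f) (x : ℝ) {t : ℝ}
    (ht : 0 < t) : f (x + t) - f x ≤ K * (f x - f (x - t)) :=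
  (div_le_iff₀ (sub_pos.mpr (hf (by linarith)))).mp (hq x t ht).2

lemma pos (hq : IsQuasiSymmetry K f) (hf : StrictMono f) : 0 < K := by
  have hright : 0 < f (0 + 1) - f 0 := sub_pos.mpr (hf (by norm_num))
  have hleft : 0 < f 0 - f (0 - 1) := sub_pos.mpr (hf (by norm_num))
  exact pos_of_mul_pos_left (hright.trans_le (hq.right_increment_le hf 0 one_pos)) hleft.le

lemma left_increment_le (hq : IsQuasiSymmetry K f) (hf : StrictMono f) (x : ℝ) {t : ℝ}
    (ht : 0 < t) : f x - f (x - t) ≤ K * (f (x + t) - f x) := by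
  have h := (div_le_div_iff₀ (hq.pos hf) (sub_pos.mpr (hf (by linarith : x - t < x)))).mp
    (hq x t ht).1
  linarith

lemma double_span_le (hq : IsQuasiSymmetry K f) (hf : StrictMono f) (x : ℝ) {t : ℝ}
    (ht : 0 < t) :
    f (x + 2 * t) - f (x - 2 * t) ≤ (K + 1) * (f (x + t) - f (x - t)) := by
  have hright := hq.right_increment_le hf (x + t) ht
  have hleft := hq.left_increment_le hf (x - t) ht
  rw [add_assoc, ← two_mul, add_sub_cancel_right] at hright
  rw [sub_add_cancel, sub_sub, ← two_mul] at hleft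
  linarith

end IsQuasiSymmetry

theorem qs_pushforward_doubling_general (K : ℝ) :
    ∃ M : NNReal, 0 < M ∧
      ∀ f : ℝ → ℝ, StrictMono f → Continuous f → Function.Surjective f →
        IsQuasiSymmetry K f →
        ∀ p R : ℝ, 0 < R →
          0 < volume (f '' Icc (p - 2 * R) (p + 2 * R)) ∧
          volume (f '' Icc (p - 2 * R) (p + 2 * R)) ≤
            (M : ENNReal) * volume (f '' Icc (p - R) (p + R)) := by
  refine ⟨K.toNNReal + 1, by positivity, fun f hf hc _ hq p R hR => ?_⟩
  simp only [hc.image_Icc_of_strictMono hf, Real.volume_Icc]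
  refine ⟨ENNReal.ofReal_pos.mpr (sub_pos.mpr (hf (by linarith))), ?_⟩
  have hM : ((K.toNNReal + 1 : NNReal) : ENNReal) = ENNReal.ofReal (K + 1) := by
    rw [ENNReal.ofReal_add (hq.pos hf).le zero_le_one]
    simp [ENNReal.ofReal]
  rw [hM, ← ENNReal.ofReal_mul (by linarith [hq.pos hf])]
  exact ENNReal.ofReal_le_ofReal (hq.double_span_le hf p hR)

/-- For `K ≥ 1` there is `M > 0`, depending only on `K`, such that for every
`K`-quasi-symmetric increasing homeomorphism `f : ℝ → ℝ` the Borel measure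
`E ↦ leb (f '' E)` is doubling with constant `M`:
`0 < leb (f '' B(p,2R)) ≤ M · leb (f '' B(p,R))` for all `p` and `R > 0`. -/
theorem qs_pushforward_doubling (K : ℝ) (hK : 1 ≤ K) :
    ∃ M : NNReal, 0 < M ∧
      ∀ f : ℝ → ℝ, StrictMono f → Continuous f → Function.Surjective f →
        IsQuasiSymmetry K f →
        ∀ p R : ℝ, 0 < R →
          0 < volume (f '' Icc (p - 2 * R) (p + 2 * R)) ∧
          volume (f '' Icc (p - 2 * R) (p + 2 * R)) ≤
            (M : ENNReal) * volume (f '' Icc (p - R) (p + R)) :=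
  qs_pushforward_doubling_general K
end

section
/- Let 𝒞 be a collection of nondegenerate closed intervals in ℝ and let δ ∈ (0,1). Suppose that for every nondegenerate closed interval I ⊆ ℝ there exist finitely many intervals of 𝒞, contained in I and with pairwise disjoint interiors, whose total Lebesgue measure exceeds δ·leb(I). Then for every nondegenerate closed interval I ⊆ ℝ there exists a countable subcollection of 𝒞 consisting of intervals contained in I with pairwise disjoint interiors whose union has full Lebesgue measure in I. -/
/-!
Removing a finite packing of closed intervals from `(a, b)` leaves finitely many disjoint open
gaps. Applying the hypothesis inside every gap covers a `δ`-fraction of each, so the uncovered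
measure is multiplied by at most `1 - δ`. Iterating from the empty packing gives an increasing
sequence of finite packings whose union leaves an uncovered set of measure at most
`(1 - δ) ^ n * (b - a)` for every `n`, hence of measure zero.
-/

open MeasureTheory Set

theorem exists_pairwiseDisjoint_Ioo_diff_Icc (S : Finset (ℝ × ℝ))
    (hS : (S : Set (ℝ × ℝ)).PairwiseDisjoint fun r => Ioo r.1 r.2) {p q : ℝ} (hpq : p ≤ q) :
    ∃ S' : Finset (ℝ × ℝ), (∀ r' ∈ S', ∃ r ∈ S, Icc r'.1 r'.2 ⊆ Icc r.1 r.2) ∧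
      (S' : Set (ℝ × ℝ)).PairwiseDisjoint (fun r => Ioo r.1 r.2) ∧
      (⋃ r ∈ S, Ioo r.1 r.2) \ Icc p q = ⋃ r ∈ S', Ioo r.1 r.2 := by
  classical
  set left : ℝ × ℝ → ℝ × ℝ := fun r => (r.1, min r.2 p)
  set right : ℝ × ℝ → ℝ × ℝ := fun r => (max r.1 q, r.2)
  refine ⟨S.image left ∪ S.image right, ?_, ?_, ?_⟩
  · simp only [Finset.mem_union, Finset.mem_image]
    rintro _ (⟨r, hr, rfl⟩ | ⟨r, hr, rfl⟩)
    · exact ⟨r, hr, Icc_subset_Icc_right (min_le_left _ _)⟩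
    · exact ⟨r, hr, Icc_subset_Icc_left (le_max_left _ _)⟩
  · rw [Finset.coe_union, Finset.coe_image, Finset.coe_image]
    refine (hS.image_of_le fun r => ?_).union (hS.image_of_le fun r => ?_) ?_
    · exact Ioo_subset_Ioo_right (min_le_left _ _)
    · exact Ioo_subset_Ioo_left (le_max_left _ _)
    rintro _ ⟨r, hr, rfl⟩ _ ⟨r', hr', rfl⟩ -
    rcases eq_or_ne r r' with rfl | hne
    · refine Set.disjoint_left.2 fun x hx hx' => ?_
      simp only [left, right, mem_Ioo, lt_min_iff, max_lt_iff] at hx hx'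
      linarith
    · exact (hS hr hr' hne).mono (Ioo_subset_Ioo_right (min_le_left _ _))
        (Ioo_subset_Ioo_left (le_max_left _ _))
  · ext x
    simp only [left, right, mem_sdiff, mem_iUnion, mem_Ioo, mem_Icc, Finset.mem_union,
      Finset.mem_image, exists_prop, exists_exists_and_eq_and, or_and_right, exists_or,
      lt_min_iff, max_lt_iff]
    constructor
    · rintro ⟨⟨r, hr, hx⟩, hxpq⟩
      rcases lt_or_ge x p with hxp | hxp
      · exact Or.inl ⟨r, hr, hx.1, hx.2, hxp⟩
      · exact Or.inr ⟨r, hr, ⟨hx.1, lt_of_not_ge fun h => hxpq ⟨hxp, h⟩⟩, hx.2⟩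
    · rintro (⟨r, hr, hx⟩ | ⟨r, hr, hx⟩)
      · exact ⟨⟨r, hr, hx.1, hx.2.1⟩, fun h => by linarith [h.1, hx.2.2]⟩
      · exact ⟨⟨r, hr, hx.1.1, hx.2⟩, fun h => by linarith [h.2, hx.1.2]⟩

theorem exists_pairwiseDisjoint_Ioo_eq_Ioo_diff_sUnion (a b : ℝ) (F : Finset (Set ℝ))
    (hF : ∀ E ∈ F, ∃ p q, p ≤ q ∧ E = Icc p q) :
    ∃ S : Finset (ℝ × ℝ), (∀ r ∈ S, Icc r.1 r.2 ⊆ Icc a b) ∧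
      (S : Set (ℝ × ℝ)).PairwiseDisjoint (fun r => Ioo r.1 r.2) ∧
      Ioo a b \ ⋃₀ F = ⋃ r ∈ S, Ioo r.1 r.2 := by
  classical
  induction F using Finset.induction_on with
  | empty => exact ⟨{(a, b)}, by simp, by simp, by simp⟩
  | insert E F _ ih =>
    obtain ⟨S, hSab, hS, hSeq⟩ := ih fun E' hE' => hF E' (Finset.mem_insert_of_mem hE')
    obtain ⟨p, q, hpq, rfl⟩ := hF E (Finset.mem_insert_self E F)
    obtain ⟨S', hS'S, hS', hS'eq⟩ := exists_pairwiseDisjoint_Ioo_diff_Icc S hS hpq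
    refine ⟨S', fun r' hr' => ?_, hS', ?_⟩
    · obtain ⟨r, hr, hsub⟩ := hS'S r' hr'
      exact hsub.trans (hSab r hr)
    · rw [Finset.coe_insert, sUnion_insert, union_comm, ← sdiff_sdiff, hSeq, hS'eq]

theorem sum_measure_le_measure_sUnion_of_pairwiseDisjoint_interior {α : Type*}
    [TopologicalSpace α] [MeasurableSpace α] [OpensMeasurableSpace α] {μ : Measure α}
    {F : Finset (Set α)} (hF : (F : Set (Set α)).PairwiseDisjoint interior)
    (hint : ∀ E ∈ F, μ (interior E) = μ E) :
    ∑ E ∈ F, μ E ≤ μ (⋃₀ F) :=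
  calc ∑ E ∈ F, μ E = ∑ E ∈ F, μ (interior E) := (Finset.sum_congr rfl hint).symm
    _ = μ (⋃ E ∈ F, interior E) :=
      (measure_biUnion_finset hF fun _ _ => isOpen_interior.measurableSet).symm
    _ ≤ μ (⋃₀ F) := by
      rw [sUnion_eq_biUnion]
      exact measure_mono (iUnion₂_mono fun _ _ => interior_subset)

theorem exists_monotone_seq_of_exists_le_mul {β : Type*} [Preorder β] {P : β → Prop}
    {u : β → ENNReal} {c : ENNReal} {x₀ : β} (h₀ : P x₀)
    (step : ∀ x, P x → ∃ y, x ≤ y ∧ P y ∧ u y ≤ c * u x) :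
    ∃ x : ℕ → β, Monotone x ∧ (∀ n, P (x n)) ∧ ∀ n, u (x n) ≤ c ^ n * u x₀ := by
  choose! next hle hP hu using step
  have hPn : ∀ n, P (next^[n] x₀) := by
    intro n
    induction n with
    | zero => exact h₀
    | succ n ih => rw [Function.iterate_succ_apply']; exact hP _ ih
  refine ⟨fun n => next^[n] x₀, monotone_nat_of_le_succ fun n => ?_, hPn, fun n => ?_⟩
  · rw [Function.iterate_succ_apply']
    exact hle _ (hPn n)
  · induction n with
    | zero => simp
    | succ n ih =>
      change u (next^[n + 1] x₀) ≤ _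
      rw [Function.iterate_succ_apply', pow_succ', mul_assoc]
      exact (hu _ (hPn n)).trans (mul_le_mul_right ih c)

theorem ENNReal.eq_zero_of_forall_le_pow_mul {x c a : ENNReal} (hc : c < 1) (ha : a ≠ ⊤)
    (h : ∀ n : ℕ, x ≤ c ^ n * a) : x = 0 := by
  have hlim := ENNReal.Tendsto.mul_const (ENNReal.tendsto_pow_atTop_nhds_zero_of_lt_one hc)
    (Or.inr ha)
  rw [zero_mul] at hlim
  exact nonpos_iff_eq_zero.1 (ge_of_tendsto' hlim h)

def IsPacking {α : Type*} [TopologicalSpace α] (𝒞 : Set (Set α)) (s : Set α)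
    (D : Set (Set α)) : Prop :=
  D ⊆ 𝒞 ∧ (∀ E ∈ D, E ⊆ s) ∧ D.PairwiseDisjoint interior

namespace IsPacking

variable {α : Type*} [TopologicalSpace α] {𝒞 : Set (Set α)} {s : Set α}

theorem empty : IsPacking 𝒞 s ∅ :=
  ⟨empty_subset _, fun _ h => h.elim, pairwiseDisjoint_empty⟩

theorem iUnion {ι : Type*} {D : ι → Set (Set α)} (hdir : Directed (· ⊆ ·) D)
    (hD : ∀ i, IsPacking 𝒞 s (D i)) : IsPacking 𝒞 s (⋃ i, D i) := by
  refine ⟨iUnion_subset fun i => (hD i).1, fun E hE => ?_, (pairwiseDisjoint_iUnion hdir).2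
    fun i => (hD i).2.2⟩
  obtain ⟨i, hi⟩ := mem_iUnion.1 hE
  exact (hD i).2.1 E hi

theorem mono_right {t : Set α} {D : Set (Set α)} (hD : IsPacking 𝒞 s D) (hst : s ⊆ t) :
    IsPacking 𝒞 t D :=
  ⟨hD.1, fun E hE => (hD.2.1 E hE).trans hst, hD.2.2⟩

theorem union {D D' : Set (Set α)} (hD : IsPacking 𝒞 s D) (hD' : IsPacking 𝒞 s D')
    (h : ∀ E ∈ D, ∀ E' ∈ D', Disjoint (interior E) (interior E')) :
    IsPacking 𝒞 s (D ∪ D') :=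
  ⟨union_subset hD.1 hD'.1, fun E hE => hE.elim (hD.2.1 E) (hD'.2.1 E),
    hD.2.2.union hD'.2.2 fun E hE E' hE' _ => h E hE E' hE'⟩

theorem biUnion {ι : Type*} {I : Set ι} {D : ι → Set (Set α)}
    (hD : ∀ i ∈ I, IsPacking 𝒞 s (D i))
    (hI : I.PairwiseDisjoint fun i => ⋃ E ∈ D i, interior E) :
    IsPacking 𝒞 s (⋃ i ∈ I, D i) := by
  refine ⟨iUnion₂_subset fun i hi => (hD i hi).1, fun E hE => ?_,
    hI.biUnion fun i hi => (hD i hi).2.2⟩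
  obtain ⟨i, hi, hE⟩ := mem_iUnion₂.1 hE
  exact (hD i hi).2.1 E hE

end IsPacking

section

variable {𝒞 : Set (Set ℝ)} {δ : ℝ}

theorem exists_isPacking_volume_Icc_diff_le (h𝒞 : ∀ E ∈ 𝒞, ∃ p q, E = Icc p q)
    (hδ : 0 ≤ δ)
    (hcov : ∀ a b : ℝ, a < b → ∃ F : Finset (Set ℝ), IsPacking 𝒞 (Icc a b) F ∧
      ENNReal.ofReal (δ * (b - a)) < ∑ E ∈ F, volume E) (c d : ℝ) :
    ∃ G : Finset (Set ℝ), IsPacking 𝒞 (Icc c d) G ∧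
      volume (Icc c d \ ⋃₀ G) ≤ ENNReal.ofReal (1 - δ) * volume (Ioo c d) := by
  rcases le_or_gt d c with hdc | hcd
  · exact ⟨∅, by simpa using IsPacking.empty, by simp [Real.volume_Icc, hdc]⟩
  obtain ⟨G, hG, hGvol⟩ := hcov c d hcd
  have hcovered : ENNReal.ofReal (δ * (d - c)) ≤ volume (⋃₀ (G : Set (Set ℝ))) := by
    refine hGvol.le.trans (sum_measure_le_measure_sUnion_of_pairwiseDisjoint_interior hG.2.2
      fun E hE => ?_)
    obtain ⟨p, q, rfl⟩ := h𝒞 E (hG.1 hE)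
    rw [interior_Icc, Real.volume_Ioo, Real.volume_Icc]
  have hmeas : MeasurableSet (⋃₀ (G : Set (Set ℝ))) := by
    refine G.finite_toSet.measurableSet_sUnion fun E hE => ?_
    obtain ⟨p, q, rfl⟩ := h𝒞 E (hG.1 hE)
    exact measurableSet_Icc
  have hsub : ⋃₀ (G : Set (Set ℝ)) ⊆ Icc c d := sUnion_subset hG.2.1
  refine ⟨G, hG, ?_⟩
  calc volume (Icc c d \ ⋃₀ G) = volume (Icc c d) - volume (⋃₀ (G : Set (Set ℝ))) :=
        measure_sdiff hsub hmeas.nullMeasurableSet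
          ((measure_mono hsub).trans_lt measure_Icc_lt_top).ne
    _ ≤ ENNReal.ofReal (d - c) - ENNReal.ofReal (δ * (d - c)) := by
        rw [Real.volume_Icc]
        exact tsub_le_tsub_left hcovered _
    _ = ENNReal.ofReal (1 - δ) * volume (Ioo c d) := by
        rw [Real.volume_Ioo, ← ENNReal.ofReal_sub _ (by positivity),
          ← ENNReal.ofReal_mul' (by linarith)]
        ring_nf

theorem exists_isPacking_superset_volume_Icc_diff_le
    (h𝒞 : ∀ E ∈ 𝒞, ∃ p q, p ≤ q ∧ E = Icc p q) (hδ : 0 ≤ δ)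
    (hcov : ∀ a b : ℝ, a < b → ∃ F : Finset (Set ℝ), IsPacking 𝒞 (Icc a b) F ∧
      ENNReal.ofReal (δ * (b - a)) < ∑ E ∈ F, volume E)
    {a b : ℝ} {F : Finset (Set ℝ)} (hF : IsPacking 𝒞 (Icc a b) F) :
    ∃ F' : Finset (Set ℝ), F ⊆ F' ∧ IsPacking 𝒞 (Icc a b) F' ∧
      volume (Icc a b \ ⋃₀ F') ≤ ENNReal.ofReal (1 - δ) * volume (Icc a b \ ⋃₀ F) := by
  classical
  obtain ⟨S, hSab, hS, hSeq⟩ :=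
    exists_pairwiseDisjoint_Ioo_eq_Ioo_diff_sUnion a b F fun E hE => h𝒞 E (hF.1 hE)
  choose G hG hGvol using exists_isPacking_volume_Icc_diff_le
    (fun E hE => (h𝒞 E hE).imp fun p ⟨q, _, hE⟩ => ⟨q, hE⟩) hδ hcov
  set F' := F ∪ S.biUnion fun r => G r.1 r.2
  have hGF' : ∀ r ∈ S, ⋃₀ (G r.1 r.2 : Set (Set ℝ)) ⊆ ⋃₀ F' := fun r hr =>
    sUnion_mono <| Finset.coe_subset.2 <|
      (Finset.subset_biUnion_of_mem (fun r => G r.1 r.2) hr).trans Finset.subset_union_right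
  refine ⟨F', Finset.subset_union_left, ?_, ?_⟩
  · have hint : ∀ r : ℝ × ℝ, ∀ E ∈ G r.1 r.2, interior E ⊆ Ioo r.1 r.2 := fun r E hE =>
      interior_Icc (a := r.1) ▸ interior_mono ((hG r.1 r.2).2.1 E hE)
    rw [Finset.coe_union, Finset.coe_biUnion]
    refine hF.union (IsPacking.biUnion (fun r hr => (hG r.1 r.2).mono_right (hSab r hr))
      (hS.mono fun r => iUnion₂_subset (hint r))) fun E hE E' hE' => ?_
    obtain ⟨r, hr, hE'r⟩ := mem_iUnion₂.1 hE'
    refine disjoint_left.2 fun x hxE hxE' => ?_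
    have hx : x ∈ Ioo a b \ ⋃₀ F := hSeq ▸ mem_iUnion₂.2 ⟨r, hr, hint r E' hE'r hxE'⟩
    exact hx.2 ⟨E, hE, interior_subset hxE⟩
  · have hcover : Ioo a b \ ⋃₀ F' ⊆ ⋃ r ∈ S, Icc r.1 r.2 \ ⋃₀ (G r.1 r.2 : Set (Set ℝ)) := by
      rintro x ⟨hx, hxF'⟩
      have hxF : x ∈ Ioo a b \ ⋃₀ F :=
        ⟨hx, fun h => hxF' (sUnion_mono (by simp [F']) h)⟩
      rw [hSeq] at hxF
      obtain ⟨r, hr, hxr⟩ := mem_iUnion₂.1 hxF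
      exact mem_iUnion₂.2 ⟨r, hr, Ioo_subset_Icc_self hxr, fun h => hxF' (hGF' r hr h)⟩
    have hIoo_Icc : ∀ X : Set ℝ, volume (Ioo a b \ X) = volume (Icc a b \ X) := fun X =>
      measure_congr (Ioo_ae_eq_Icc.diff (ae_eq_refl X))
    calc volume (Icc a b \ ⋃₀ F') = volume (Ioo a b \ ⋃₀ F') := (hIoo_Icc _).symm
      _ ≤ ∑ r ∈ S, volume (Icc r.1 r.2 \ ⋃₀ (G r.1 r.2 : Set (Set ℝ))) :=
        (measure_mono hcover).trans (measure_biUnion_finset_le _ _)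
      _ ≤ ∑ r ∈ S, ENNReal.ofReal (1 - δ) * volume (Ioo r.1 r.2) :=
        Finset.sum_le_sum fun r _ => hGvol r.1 r.2
      _ = ENNReal.ofReal (1 - δ) * volume (Icc a b \ ⋃₀ F) := by
        rw [← Finset.mul_sum, ← measure_biUnion_finset hS fun _ _ => measurableSet_Ioo, ← hSeq,
          hIoo_Icc]

end

/-- If `𝒞` is a collection of nondegenerate closed intervals such that every nondegenerate
closed interval `I` contains finitely many members of `𝒞` with pairwise disjoint interiors
of total Lebesgue measure exceeding `δ · leb I`, then every nondegenerate closed interval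
`I` contains a countable subcollection of `𝒞` with pairwise disjoint interiors whose union
has full Lebesgue measure in `I`. -/
theorem fill_interval_of_definite_proportion (𝒞 : Set (Set ℝ))
    (h𝒞 : ∀ E ∈ 𝒞, ∃ a b : ℝ, a < b ∧ E = Icc a b)
    (δ : ℝ) (hδ : δ ∈ Set.Ioo (0 : ℝ) 1)
    (hcov : ∀ a b : ℝ, a < b → ∃ F : Finset (Set ℝ), ↑F ⊆ 𝒞 ∧
      (∀ E ∈ F, E ⊆ Icc a b) ∧
      ((F : Set (Set ℝ)).Pairwise fun E E' => Disjoint (interior E) (interior E')) ∧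
      ENNReal.ofReal (δ * (b - a)) < ∑ E ∈ F, volume E) :
    ∀ a b : ℝ, a < b → ∃ D : Set (Set ℝ), D ⊆ 𝒞 ∧ D.Countable ∧
      (∀ E ∈ D, E ⊆ Icc a b) ∧
      (D.Pairwise fun E E' => Disjoint (interior E) (interior E')) ∧
      volume (Icc a b \ ⋃₀ D) = 0 := by
  intro a b _
  have h𝒞' : ∀ E ∈ 𝒞, ∃ p q, p ≤ q ∧ E = Icc p q := fun E hE =>
    let ⟨p, q, hpq, hE⟩ := h𝒞 E hE; ⟨p, q, hpq.le, hE⟩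
  have hcov' : ∀ a b : ℝ, a < b → ∃ F : Finset (Set ℝ), IsPacking 𝒞 (Icc a b) F ∧
      ENNReal.ofReal (δ * (b - a)) < ∑ E ∈ F, volume E := fun a b hab =>
    (hcov a b hab).imp fun _ ⟨h𝒞F, hFab, hF, hFvol⟩ => ⟨⟨h𝒞F, hFab, hF⟩, hFvol⟩
  have hc : ENNReal.ofReal (1 - δ) < 1 := ENNReal.ofReal_lt_one.2 (by linarith [hδ.1])
  obtain ⟨F, hF_mono, hF, hF_vol⟩ :=
    exists_monotone_seq_of_exists_le_mul (P := fun F : Finset (Set ℝ) => IsPacking 𝒞 (Icc a b) F)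
      (u := fun F => volume (Icc a b \ ⋃₀ F)) (x₀ := ∅) (by simpa using IsPacking.empty)
      fun F hF => exists_isPacking_superset_volume_Icc_diff_le h𝒞' hδ.1.le hcov' hF
  set D := ⋃ n, (F n : Set (Set ℝ))
  obtain ⟨hD𝒞, hDab, hD⟩ : IsPacking 𝒞 (Icc a b) D :=
    IsPacking.iUnion (Monotone.directed_le fun m n h => Finset.coe_subset.2 (hF_mono h)) hF
  have hD_vol : ∀ n, volume (Icc a b \ ⋃₀ D) ≤ ENNReal.ofReal (1 - δ) ^ n * volume (Icc a b) :=
    fun n => (measure_mono (sdiff_subset_sdiff_right (sUnion_mono (subset_iUnion _ n)))).trans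
      (by simpa using hF_vol n)
  exact ⟨D, hD𝒞, countable_iUnion fun n => (F n).countable_toSet, hDab, hD,
    ENNReal.eq_zero_of_forall_le_pow_mul hc measure_Icc_lt_top.ne hD_vol⟩
end
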